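/- arXiv:1403.7517 — 3 statements merged into one kernel-verified Lean document; each statement's English description precedes it below -/
import Mathlib

section
/- Let X be a random variable uniform on [-1,1] and fix s ∈ (0,1]. Then P(|min(X,s)| < |Y|), where Y is an independent uniform random variable on [-1,1], equals (s² - 2s + 3)/4. -/
/-!
Condition on `X = x`: the event `|Y| > t` with `t = |min x s| ∈ [0, 1]` has probability `1 - t`,
so the answer is `½ ∫_{-1}^{1} (1 - |min x s|) dx`, and `∫_{-1}^{1} |min x s| dx` splits at `0`
and `s` into `½ + (s² / 2) + s (1 - s)`.
-/

open MeasureTheory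

noncomputable def unif : Measure ℝ :=
  (2 : ENNReal)⁻¹ • (volume.restrict (Set.Icc (-1 : ℝ) 1))

open Set

lemma unif_apply {A : Set ℝ} (hA : MeasurableSet A) :
    unif A = 2⁻¹ * volume (A ∩ Icc (-1) 1) := by
  rw [unif, Measure.smul_apply, Measure.restrict_apply hA, smul_eq_mul]

instance : IsProbabilityMeasure unif :=
  ⟨by
    rw [unif_apply MeasurableSet.univ, univ_inter, Real.volume_Icc]
    norm_num [ENNReal.inv_mul_cancel]⟩

lemma unif_lt_abs {t : ℝ} (ht : 0 ≤ t) : unif {y | t < |y|} = ENNReal.ofReal (1 - t) := by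
  have hsplit : {y : ℝ | t < |y|} ∩ Icc (-1) 1 = Ico (-1) (-t) ∪ Ioc t 1 := by
    ext y
    simp only [mem_inter_iff, mem_ofPred_eq, mem_Icc, mem_union, mem_Ico, mem_Ioc, lt_abs]
    constructor
    · rintro ⟨h | h, h₁, h₂⟩
      · exact Or.inr ⟨h, h₂⟩
      · exact Or.inl ⟨h₁, by linarith⟩
    · rintro (⟨h₁, h₂⟩ | ⟨h₁, h₂⟩)
      · exact ⟨Or.inr (by linarith), h₁, by linarith⟩
      · exact ⟨Or.inl h₁, by linarith, h₂⟩
  have hdisj : Disjoint (Ico (-1 : ℝ) (-t)) (Ioc t 1) :=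
    disjoint_left.2 fun y hy hy' => by linarith [hy.2, hy'.1]
  rw [unif_apply (measurableSet_lt measurable_const (by fun_prop)), hsplit,
    measure_union hdisj measurableSet_Ioc, Real.volume_Ico, Real.volume_Ioc,
    show -t - -1 = 1 - t by ring, ← two_mul, ← mul_assoc,
    ENNReal.inv_mul_cancel (by norm_num) (by norm_num), one_mul]

lemma integral_abs_min {s : ℝ} (hs0 : 0 ≤ s) (hs1 : s ≤ 1) :
    ∫ x in (-1 : ℝ)..1, |min x s| = 1 / 2 + s - s ^ 2 / 2 := by
  have hint : ∀ a b : ℝ, IntervalIntegrable (fun x => |min x s|) volume a b :=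
    fun a b => (by fun_prop : Continuous fun x : ℝ => |min x s|).intervalIntegrable a b
  have hneg : ∫ x in (-1 : ℝ)..0, |min x s| = ∫ x in (-1 : ℝ)..0, -x :=
    intervalIntegral.integral_congr fun x hx => by
      rw [uIcc_of_le (by norm_num)] at hx
      rw [min_eq_left (hx.2.trans hs0), abs_of_nonpos hx.2]
  have hpos : ∫ x in (0 : ℝ)..s, |min x s| = ∫ x in (0 : ℝ)..s, x :=
    intervalIntegral.integral_congr fun x hx => by
      rw [uIcc_of_le hs0] at hx
      rw [min_eq_left hx.2, abs_of_nonneg hx.1]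
  have hcap : ∫ x in s..(1 : ℝ), |min x s| = ∫ _ in s..(1 : ℝ), s :=
    intervalIntegral.integral_congr fun x hx => by
      rw [uIcc_of_le hs1] at hx
      rw [min_eq_right hx.1, abs_of_nonneg hs0]
  rw [← intervalIntegral.integral_add_adjacent_intervals (hint _ 0) (hint _ _),
    ← intervalIntegral.integral_add_adjacent_intervals (hint 0 s) (hint _ _),
    hneg, hpos, hcap, intervalIntegral.integral_neg]
  simp only [integral_id, intervalIntegral.integral_const, smul_eq_mul]
  ring

lemma unif_prod_lt_abs {f : ℝ → ℝ} (hf : Continuous f) (hf0 : ∀ x, 0 ≤ f x)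
    (hf1 : ∀ x ∈ Icc (-1 : ℝ) 1, f x ≤ 1) :
    ((unif.prod unif) {p : ℝ × ℝ | f p.1 < |p.2|}).toReal
      = (∫ x in (-1 : ℝ)..1, (1 - f x)) / 2 := by
  have hmeas : MeasurableSet {p : ℝ × ℝ | f p.1 < |p.2|} :=
    measurableSet_lt (by fun_prop) (by fun_prop)
  have hnonneg : 0 ≤ᵐ[volume.restrict (Icc (-1 : ℝ) 1)] fun x => 1 - f x := by
    filter_upwards [ae_restrict_mem measurableSet_Icc] with x hx
    exact sub_nonneg.2 (hf1 x hx)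
  rw [Measure.prod_apply hmeas]
  simp only [preimage_ofPred_eq, unif_lt_abs (hf0 _)]
  rw [unif, lintegral_smul_measure, ← ofReal_integral_eq_lintegral_ofReal
    (by fun_prop : Continuous fun x => 1 - f x).integrableOn_Icc hnonneg,
    integral_Icc_eq_integral_Ioc, ← intervalIntegral.integral_of_le (by norm_num),
    smul_eq_mul, ENNReal.toReal_mul, ENNReal.toReal_ofReal
      (intervalIntegral.integral_nonneg (by norm_num) fun x hx => sub_nonneg.2 (hf1 x hx))]
  simp [div_eq_inv_mul]

theorem stmt_0 (s : ℝ) (hs0 : 0 < s) (hs1 : s ≤ 1) :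
    ((unif.prod unif) {p : ℝ × ℝ | |min p.1 s| < |p.2|}).toReal
      = (s ^ 2 - 2 * s + 3) / 4 := by
  have hle : ∀ x ∈ Icc (-1 : ℝ) 1, |min x s| ≤ 1 := fun x hx =>
    abs_le.2 ⟨le_min hx.1 (by linarith), (min_le_right x s).trans hs1⟩
  rw [unif_prod_lt_abs (by fun_prop) (fun _ => abs_nonneg _) hle,
    intervalIntegral.integral_sub intervalIntegrable_const
      ((by fun_prop : Continuous fun x : ℝ => |min x s|).intervalIntegrable _ _),
    integral_abs_min hs0.le hs1, intervalIntegral.integral_const, smul_eq_mul]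
  ring
end

section
/- Let X be a random variable uniform on [-1,1] and fix s ∈ [-1,0]. Then P(|min(X,s)| < |Y|), where Y is an independent uniform random variable on [-1,1], equals (-s² + 2s + 3)/4. -/
open MeasureTheory

/-! By Fubini, the probability is the average over `x` of `P(|min x s| < |Y|) = 1 - |min x s|`.
For `s ≤ 0` the integrand is `1 + x` on `[-1, s]` and `1 + s` on `[s, 1]`, which integrate to
`(1 + s)² / 2 + (1 + s)(1 - s) = (-s² + 2s + 3) / 2`. -/

open Set

instance inst_s1 : IsProbabilityMeasure unif where
  measure_univ := by
    rw [unif, Measure.smul_apply, Measure.restrict_apply_univ, Real.volume_Icc, smul_eq_mul]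
    norm_num [ENNReal.inv_mul_cancel]

lemma unif_setOf_lt_abs {c : ℝ} (hc : 0 ≤ c) :
    unif {y : ℝ | c < |y|} = ENNReal.ofReal (1 - c) := by
  have hsplit : {y : ℝ | c < |y|} ∩ Icc (-1 : ℝ) 1 = Ico (-1 : ℝ) (-c) ∪ Ioc c 1 := by
    ext y
    simp only [mem_inter_iff, mem_ofPred_eq, mem_Icc, mem_union, mem_Ico, mem_Ioc, lt_abs]
    constructor
    · rintro ⟨h | h, h1, h2⟩
      · exact Or.inr ⟨h, h2⟩
      · exact Or.inl ⟨h1, by linarith⟩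
    · rintro (⟨h1, h2⟩ | ⟨h1, h2⟩)
      · exact ⟨Or.inr (by linarith), h1, by linarith⟩
      · exact ⟨Or.inl h1, by linarith, h2⟩
  have hdisj : Disjoint (Ico (-1 : ℝ) (-c)) (Ioc c 1) :=
    disjoint_left.2 fun y hy hy' => by linarith [hy.2, hy'.1]
  have hmeas : MeasurableSet {y : ℝ | c < |y|} := measurableSet_lt measurable_const measurable_abs
  rw [unif, Measure.smul_apply, Measure.restrict_apply hmeas, hsplit,
    measure_union hdisj measurableSet_Ioc, Real.volume_Ico, Real.volume_Ioc,
    show -c - -1 = 1 - c by ring, ← two_mul, smul_eq_mul, ← mul_assoc,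
    ENNReal.inv_mul_cancel two_ne_zero ENNReal.ofNat_ne_top, one_mul]

lemma unif_prod_setOf_lt_abs {g : ℝ → ℝ} (hg : Measurable g) (hg0 : ∀ x, 0 ≤ g x) :
    (unif.prod unif) {p : ℝ × ℝ | g p.1 < |p.2|} =
      ∫⁻ x, ENNReal.ofReal (1 - g x) ∂unif := by
  have hmeas : MeasurableSet {p : ℝ × ℝ | g p.1 < |p.2|} :=
    measurableSet_lt (hg.comp measurable_fst) measurable_snd.abs
  rw [Measure.prod_apply hmeas]
  exact lintegral_congr fun x => unif_setOf_lt_abs (hg0 x)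

lemma lintegral_unif_ofReal {f : ℝ → ℝ} (hf : IntegrableOn f (Icc (-1) 1))
    (hf0 : ∀ x ∈ Icc (-1 : ℝ) 1, 0 ≤ f x) :
    ∫⁻ x, ENNReal.ofReal (f x) ∂unif = ENNReal.ofReal ((∫ x in (-1)..1, f x) / 2) := by
  rw [unif, lintegral_smul_measure, ← ofReal_integral_eq_lintegral_ofReal hf
    ((ae_restrict_iff' measurableSet_Icc).2 (ae_of_all _ hf0)), integral_Icc_eq_integral_Ioc,
    ← intervalIntegral.integral_of_le (by norm_num), div_eq_inv_mul,
    ENNReal.ofReal_mul (by norm_num), ENNReal.ofReal_inv_of_pos two_pos, ENNReal.ofReal_ofNat,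
    smul_eq_mul]

lemma integral_one_sub_abs_min {s : ℝ} (hs0 : -1 ≤ s) (hs1 : s ≤ 0) :
    ∫ x in (-1)..1, (1 - |min x s|) = (-s ^ 2 + 2 * s + 3) / 2 := by
  have hcont : Continuous fun x : ℝ => 1 - |min x s| := by fun_prop
  rw [← intervalIntegral.integral_add_adjacent_intervals (b := s)
    (hcont.intervalIntegrable _ _) (hcont.intervalIntegrable _ _)]
  have hleft : ∫ x in (-1)..s, (1 - |min x s|) = ∫ x in (-1)..s, (1 + x) := by
    refine intervalIntegral.integral_congr fun x hx => ?_
    rw [uIcc_of_le hs0] at hx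
    simp only [min_eq_left hx.2, abs_of_nonpos (hx.2.trans hs1), sub_neg_eq_add]
  have hright : ∫ x in s..1, (1 - |min x s|) = ∫ x in s..1, (1 + s) := by
    refine intervalIntegral.integral_congr fun x hx => ?_
    rw [uIcc_of_le (hs1.trans zero_le_one)] at hx
    simp only [min_eq_right hx.1, abs_of_nonpos hs1, sub_neg_eq_add]
  rw [hleft, hright, intervalIntegral.integral_add intervalIntegrable_const
    intervalIntegral.intervalIntegrable_id, intervalIntegral.integral_const,
    intervalIntegral.integral_const, integral_id, smul_eq_mul, smul_eq_mul]
  ring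

theorem stmt_1 (s : ℝ) (hs0 : -1 ≤ s) (hs1 : s ≤ 0) :
    ((unif.prod unif) {p : ℝ × ℝ | |min p.1 s| < |p.2|}).toReal
      = (-s ^ 2 + 2 * s + 3) / 4 := by
  have hbound : ∀ x ∈ Icc (-1 : ℝ) 1, |min x s| ≤ 1 := fun x hx =>
    abs_le.2 ⟨le_min hx.1 hs0, (min_le_right x s).trans (hs1.trans zero_le_one)⟩
  have hcont : Continuous fun x : ℝ => 1 - |min x s| := by fun_prop
  rw [show _ = _ from unif_prod_setOf_lt_abs (g := fun x => |min x s|) (by fun_prop)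
      fun x => abs_nonneg _,
    lintegral_unif_ofReal hcont.integrableOn_Icc
      fun x hx => sub_nonneg.2 (hbound x hx),
    integral_one_sub_abs_min hs0 hs1, ENNReal.toReal_ofReal (by nlinarith)]
  ring
end

section
/- Let X₁,…,X_k be i.i.d. with an absolutely continuous distribution function F. If |min(X₁,…,X_k)| and |max(X₁,…,X_k)| have the same distribution, then F is symmetric about zero: F(−x) = 1 − F(x) for all x. -/
/-!
With `F` the distribution function, the law of `max` gives `P(|max| ≤ t) = F(t)^k - F(-t)^k` and
the law of `min` gives `P(|min| ≤ t) = (1 - F(-t))^k - (1 - F(t))^k` (no atoms, so `<` and `≤`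
may be exchanged). Equality of these says `φ(F t) = φ(F(-t))` for `φ(a) = a^k + (1-a)^k`, which
is strictly convex and symmetric about `1/2`, so `F(-t) = 1 - F(t)` or `F(-t) = F(t)`. In the
second case `F` is constant on `[-t, t]`; if that constant were `< 1/2`, continuity would give
`s ≥ t` with `F(s) = 1/2`, forcing `F(-s) = 1/2 > F(-t)`, against monotonicity. The case `> 1/2`
is the same argument for the reflected function `x ↦ 1 - F(-x)`.
-/

open Set Filter Topology MeasureTheory ProbabilityTheory

lemma strictMonoOn_half_add_pow_add_half_sub_pow {k : ℕ} (hk : 2 ≤ k) :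
    StrictMonoOn (fun d : ℝ => (1 / 2 + d) ^ k + (1 / 2 - d) ^ k) (Icc 0 (1 / 2)) := by
  refine strictMonoOn_of_deriv_pos (convex_Icc 0 (1 / 2)) (by fun_prop) fun d hd => ?_
  rw [interior_Icc, mem_Ioo] at hd
  have hderiv : HasDerivAt (fun d : ℝ => (1 / 2 + d) ^ k + (1 / 2 - d) ^ k)
      (k * (1 / 2 + d) ^ (k - 1) * 1 + k * (1 / 2 - d) ^ (k - 1) * (-1)) d :=
    (((hasDerivAt_id d).const_add _).pow k).add (((hasDerivAt_id d).const_sub _).pow k)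
  have hlt : (1 / 2 - d) ^ (k - 1) < (1 / 2 + d) ^ (k - 1) :=
    pow_lt_pow_left₀ (by linarith) (by linarith) (by omega)
  rw [hderiv.deriv]
  nlinarith [(Nat.cast_pos (α := ℝ)).2 (by omega : 0 < k)]

lemma eq_or_eq_one_sub_of_pow_add_one_sub_pow_eq {k : ℕ} (hk : 2 ≤ k) {a b : ℝ}
    (ha : a ∈ Icc 0 1) (hb : b ∈ Icc 0 1) (h : a ^ k + (1 - a) ^ k = b ^ k + (1 - b) ^ k) :
    a = b ∨ a = 1 - b := by
  have centered : ∀ c ∈ Icc (0 : ℝ) 1, |c - 1 / 2| ∈ Icc 0 (1 / 2) ∧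
      c ^ k + (1 - c) ^ k = (1 / 2 + |c - 1 / 2|) ^ k + (1 / 2 - |c - 1 / 2|) ^ k := by
    rintro c ⟨hc0, hc1⟩
    refine ⟨⟨abs_nonneg _, abs_le.2 ⟨by linarith, by linarith⟩⟩, ?_⟩
    rcases le_total (1 / 2) c with hc | hc
    · rw [abs_of_nonneg (by linarith)]; ring_nf
    · rw [abs_of_nonpos (by linarith)]; ring_nf
  obtain ⟨ha', hae⟩ := centered a ha
  obtain ⟨hb', hbe⟩ := centered b hb
  rw [hae, hbe] at h
  rcases abs_eq_abs.1 ((strictMonoOn_half_add_pow_add_half_sub_pow hk).injOn ha' hb' h) with h | h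
  · left; linarith
  · right; linarith

section Symmetry

variable {k : ℕ} {F : ℝ → ℝ}

lemma half_le_of_apply_neg_eq (hk : 2 ≤ k) (hcont : Continuous F) (hmono : Monotone F)
    (hF : ∀ x, F x ∈ Icc 0 1) (htop : ∃ T, 1 / 2 ≤ F T)
    (hpow : ∀ t, 0 ≤ t → F t ^ k + (1 - F t) ^ k = F (-t) ^ k + (1 - F (-t)) ^ k)
    {t : ℝ} (ht : 0 ≤ t) (heq : F (-t) = F t) : 1 / 2 ≤ F t := by
  by_contra! hlt
  obtain ⟨T, hT⟩ := htop
  have htT : t ≤ T := by_contra fun h => by linarith [hmono (not_le.1 h).le]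
  obtain ⟨s, hs, hFs⟩ := intermediate_value_Icc htT hcont.continuousOn ⟨hlt.le, hT⟩
  have hFns : F (-s) = 1 / 2 := by
    rcases eq_or_eq_one_sub_of_pow_add_one_sub_pow_eq hk (hF (-s)) (hF s)
      (hpow s (ht.trans hs.1)).symm with h | h <;> linarith
  linarith [hmono (neg_le_neg hs.1)]

lemma apply_neg_eq_one_sub_of_pow_add_one_sub_pow_eq (hk : 2 ≤ k) (hcont : Continuous F)
    (hmono : Monotone F) (hF : ∀ x, F x ∈ Icc 0 1) (hbot : ∃ T, F T ≤ 1 / 2)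
    (htop : ∃ T, 1 / 2 ≤ F T)
    (hpow : ∀ t, 0 ≤ t → F t ^ k + (1 - F t) ^ k = F (-t) ^ k + (1 - F (-t)) ^ k) (x : ℝ) :
    F (-x) = 1 - F x := by
  suffices key : ∀ t, 0 ≤ t → F (-t) = 1 - F t by
    rcases le_total 0 x with hx | hx
    · exact key x hx
    · linarith [neg_neg x ▸ key (-x) (neg_nonneg.2 hx)]
  intro t ht
  rcases eq_or_eq_one_sub_of_pow_add_one_sub_pow_eq hk (hF (-t)) (hF t) (hpow t ht).symm
    with heq | h
  · -- apply the one-sided bound also to the reflection `x ↦ 1 - F (-x)`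
    have hrefl : 1 / 2 ≤ 1 - F (-t) := by
      refine half_le_of_apply_neg_eq (F := fun x => 1 - F (-x)) hk (by fun_prop)
        (fun a b hab => by linarith [hmono (neg_le_neg hab)])
        (fun x => ⟨by linarith [(hF (-x)).2], by linarith [(hF (-x)).1]⟩) ?_ (fun s hs => ?_) ht
        (by simp only [neg_neg]; linarith)
      · obtain ⟨T, hT⟩ := hbot
        exact ⟨-T, by simp only [neg_neg]; linarith⟩
      · simp only [neg_neg, sub_sub_cancel]
        linarith [hpow s hs]
    linarith [half_le_of_apply_neg_eq hk hcont hmono hF htop hpow ht heq]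
  · exact h

end Symmetry

theorem StieltjesFunction.continuous_of_measure_singleton (f : StieltjesFunction ℝ)
    (h : ∀ x, f.measure {x} = 0) : Continuous f := by
  refine continuous_iff_continuousAt.2 fun x => ?_
  rw [f.mono.continuousAt_iff_leftLim_eq_rightLim, f.rightLim_eq]
  have hjump := h x
  rw [f.measure_singleton, ENNReal.ofReal_eq_zero] at hjump
  linarith [f.mono.leftLim_le (le_refl x)]

section Distribution

variable {μ : Measure ℝ} [IsProbabilityMeasure μ]

lemma continuous_cdf [NullSingletonClass μ] : Continuous (cdf μ) :=
  (cdf μ).continuous_of_measure_singleton fun x => by rw [measure_cdf, measure_singleton]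

lemma measureReal_Ioi_eq_one_sub_cdf (x : ℝ) : μ.real (Ioi x) = 1 - cdf μ x := by
  rw [← compl_Iic, measureReal_compl measurableSet_Iic, probReal_univ, cdf_eq_real]

lemma measureReal_Ici_eq_one_sub_cdf [NullSingletonClass μ] (x : ℝ) :
    μ.real (Ici x) = 1 - cdf μ x := by
  rw [← measureReal_congr Ioi_ae_eq_Ici, measureReal_Ioi_eq_one_sub_cdf]

lemma measureReal_Iio_eq_cdf [NullSingletonClass μ] (x : ℝ) : μ.real (Iio x) = cdf μ x := by
  rw [measureReal_congr Iio_ae_eq_Iic, cdf_eq_real]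

end Distribution

theorem Finset.measurable_inf' {α δ ι : Type*} [MeasurableSpace α] [MeasurableSpace δ]
    [SemilatticeInf α] [MeasurableInf₂ α] {s : Finset ι} (hs : s.Nonempty) {f : ι → δ → α}
    (hf : ∀ n ∈ s, Measurable (f n)) : Measurable (s.inf' hs f) :=
  Finset.inf'_induction hs _ (fun _f hf _g hg => hf.inf hg) fun n hn => hf n hn

section OrderStatistics

variable {Ω ι : Type*} [MeasurableSpace Ω] {P : Measure Ω} [Fintype ι] {X : ι → Ω → ℝ}
  {μ : Measure ℝ}

lemma ProbabilityTheory.iIndepFun.measureReal_iInter_preimage_eq_pow {β : Type*}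
    [MeasurableSpace β] {Y : ι → Ω → β} {ν : Measure β} (hindep : iIndepFun Y P)
    (hY : ∀ i, Measurable (Y i)) (hid : ∀ i, P.map (Y i) = ν) {s : Set β} (hs : MeasurableSet s) :
    P.real (⋂ i, Y i ⁻¹' s) = ν.real s ^ Fintype.card ι := by
  have h := hindep.measure_inter_preimage_eq_mul Finset.univ (sets := fun _ => s)
    fun _ _ => hs
  have hlaw : ∀ i, P (Y i ⁻¹' s) = ν s := fun i => by rw [← Measure.map_apply (hY i) hs, hid]
  simp only [Finset.mem_univ, iInter_true, hlaw] at h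
  simp [measureReal_def, h]

variable [IsFiniteMeasure P] [IsProbabilityMeasure μ] [NullSingletonClass μ]

lemma measureReal_map_abs_inf'_Iic (hindep : iIndepFun X P) (hX : ∀ i, Measurable (X i))
    (hid : ∀ i, P.map (X i) = μ) (hne : (Finset.univ : Finset ι).Nonempty) {t : ℝ} (ht : 0 ≤ t) :
    (P.map fun ω => |Finset.univ.inf' hne fun i => X i ω|).real (Iic t)
      = (1 - cdf μ (-t)) ^ Fintype.card ι - (1 - cdf μ t) ^ Fintype.card ι := by
  have hmeas : Measurable fun ω => Finset.univ.inf' hne fun i => X i ω := by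
    convert Finset.measurable_inf' hne fun i _ => hX i using 1
    exact funext fun ω => (Finset.inf'_apply hne X ω).symm
  have hset : (fun ω => |Finset.univ.inf' hne fun i => X i ω|) ⁻¹' Iic t
      = (⋂ i, X i ⁻¹' Ici (-t)) \ ⋂ i, X i ⁻¹' Ioi t := by
    ext ω
    simp [abs_le, Finset.le_inf'_iff, Finset.inf'_le_iff]
  rw [map_measureReal_apply hmeas.abs measurableSet_Iic, hset,
    measureReal_sdiff (iInter_mono fun i => preimage_mono (Ioi_subset_Ici (by linarith)))
      (MeasurableSet.iInter fun i => hX i measurableSet_Ioi),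
    hindep.measureReal_iInter_preimage_eq_pow hX hid measurableSet_Ici,
    hindep.measureReal_iInter_preimage_eq_pow hX hid measurableSet_Ioi,
    measureReal_Ici_eq_one_sub_cdf, measureReal_Ioi_eq_one_sub_cdf]

lemma measureReal_map_abs_sup'_Iic (hindep : iIndepFun X P) (hX : ∀ i, Measurable (X i))
    (hid : ∀ i, P.map (X i) = μ) (hne : (Finset.univ : Finset ι).Nonempty) {t : ℝ} (ht : 0 ≤ t) :
    (P.map fun ω => |Finset.univ.sup' hne fun i => X i ω|).real (Iic t)
      = cdf μ t ^ Fintype.card ι - cdf μ (-t) ^ Fintype.card ι := by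
  have hmeas : Measurable fun ω => Finset.univ.sup' hne fun i => X i ω := by
    convert Finset.measurable_sup' hne fun i _ => hX i using 1
    exact funext fun ω => (Finset.sup'_apply hne X ω).symm
  have hset : (fun ω => |Finset.univ.sup' hne fun i => X i ω|) ⁻¹' Iic t
      = (⋂ i, X i ⁻¹' Iic t) \ ⋂ i, X i ⁻¹' Iio (-t) := by
    ext ω
    simp [abs_le, Finset.sup'_le_iff, Finset.le_sup'_iff, and_comm]
  rw [map_measureReal_apply hmeas.abs measurableSet_Iic, hset,
    measureReal_sdiff (iInter_mono fun i => preimage_mono (Iio_subset_Iic (by linarith)))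
      (MeasurableSet.iInter fun i => hX i measurableSet_Iio),
    hindep.measureReal_iInter_preimage_eq_pow hX hid measurableSet_Iic,
    hindep.measureReal_iInter_preimage_eq_pow hX hid measurableSet_Iio,
    measureReal_Iio_eq_cdf, ← cdf_eq_real]

end OrderStatistics

theorem stmt_6 {Ω : Type*} [MeasurableSpace Ω] (P : Measure Ω) [IsProbabilityMeasure P]
    (k : ℕ) (hk : 2 ≤ k) (X : Fin k → Ω → ℝ) (hX : ∀ i, Measurable (X i))
    (hindep : iIndepFun X P)
    (μ : Measure ℝ) (hid : ∀ i, Measure.map (X i) P = μ)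
    (hac : μ ≪ volume)
    (heq : Measure.map (fun ω =>
        |Finset.univ.inf' (Finset.univ_nonempty_iff.2 ⟨⟨0, by omega⟩⟩) (fun i => X i ω)|) P
      = Measure.map (fun ω =>
        |Finset.univ.sup' (Finset.univ_nonempty_iff.2 ⟨⟨0, by omega⟩⟩) (fun i => X i ω)|) P) :
    ∀ x : ℝ, (μ (Set.Iic (-x))).toReal = 1 - (μ (Set.Iic x)).toReal := by
  have : IsProbabilityMeasure μ :=
    hid ⟨0, by omega⟩ ▸ Measure.isProbabilityMeasure_map (hX _).aemeasurable
  have : NullSingletonClass μ := ⟨fun x => hac (measure_singleton x)⟩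
  have hbot : ∃ T, cdf μ T ≤ 1 / 2 :=
    ((tendsto_cdf_atBot μ).eventually (eventually_le_nhds (by norm_num))).exists
  have htop : ∃ T, 1 / 2 ≤ cdf μ T :=
    ((tendsto_cdf_atTop μ).eventually (eventually_ge_nhds (by norm_num))).exists
  have hpow : ∀ t, 0 ≤ t →
      cdf μ t ^ k + (1 - cdf μ t) ^ k = cdf μ (-t) ^ k + (1 - cdf μ (-t)) ^ k := by
    intro t ht
    have h := congrArg (fun ν : Measure ℝ => ν.real (Iic t)) heq
    simp only [measureReal_map_abs_inf'_Iic hindep hX hid _ ht,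
      measureReal_map_abs_sup'_Iic hindep hX hid _ ht, Fintype.card_fin] at h
    linarith
  intro x
  simpa only [cdf_eq_real, measureReal_def] using
    apply_neg_eq_one_sub_of_pow_add_one_sub_pow_eq hk continuous_cdf (monotone_cdf μ)
      (fun x => ⟨cdf_nonneg μ x, cdf_le_one μ x⟩) hbot htop hpow x
end
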